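/- Let G be a graph containing a triangle v v₁ v₂ where deg(v) = 3 with N(v) = {v₁, v₂, v₃}. Let G' = (G − v) + v₁v₃. If G' admits a distance-2 coloring with k colors and k ≥ 3Δ(G) − 1, then G admits a distance-2 coloring with k colors. -/

import Mathlib

/-- A distance-2 coloring with `k` colors: any two distinct vertices at
distance at most 2 (i.e. adjacent or with a common neighbor) receive
distinct colors. -/
def IsDist2Coloring {W : Type*} (H : SimpleGraph W) {k : ℕ} (c : W → Fin k) : Prop :=
  ∀ u w, u ≠ w → (H.Adj u w ∨ ∃ x, H.Adj u x ∧ H.Adj x w) → c u ≠ c w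

/-- Add the edge `ab` to a graph (no effect if already present or `a = b`). -/
def addEdge {W : Type*} (H : SimpleGraph W) (a b : W) : SimpleGraph W :=
  H ⊔ SimpleGraph.fromEdgeSet {s(a, b)}

/-!
Color `G - v` by restricting the coloring of `G'`. Two vertices other than `v` that are
within distance 2 of each other in `G` only through `v` both lie in `N(v) = {v₁, v₂, v₃}`,
and in `G'` the vertex `v₁` is adjacent to the other two, so they are still within distance 2
in `G'`. It remains to color `v`: the vertices within distance 2 of `v` lie in
`{v₃} ∪ ⋃_{x ∈ N(v)} (N(x) \ {v})` (`v₁` and `v₂` are neighbors of each other), a set of at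
most `1 + 3(Δ - 1) < k` vertices, so a color is left for `v`.
-/

open Finset

namespace SimpleGraph

variable {V : Type*} {G : SimpleGraph V}

variable (G) in
def Dist2Adj (u w : V) : Prop := G.Adj u w ∨ ∃ x, G.Adj u x ∧ G.Adj x w

lemma Dist2Adj.symm {u w : V} (h : G.Dist2Adj u w) : G.Dist2Adj w u := by
  rcases h with h | ⟨x, hux, hxw⟩
  exacts [.inl h.symm, .inr ⟨x, hxw.symm, hux.symm⟩]

theorem exists_isDist2Coloring_extend_of_card_lt {k : ℕ} (v : V) (c : {u : V | u ≠ v} → Fin k)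
    (hc : ∀ u w, u ≠ w → G.Dist2Adj u.1 w.1 → c u ≠ c w)
    (T : Finset V) (hT : ∀ w, w ≠ v → G.Dist2Adj v w → w ∈ T) (hTk : #T < k) :
    ∃ c' : V → Fin k, IsDist2Coloring G c' := by
  classical
  have hsub : #(T.subtype (· ∈ {u : V | u ≠ v})) ≤ #T :=
    (card_subtype _ _).trans_le (card_filter_le _ _)
  have hS : #((T.subtype (· ∈ {u : V | u ≠ v})).image c) < #(univ : Finset (Fin k)) := by
    rw [card_univ, Fintype.card_fin]
    exact card_image_le.trans_lt (hsub.trans_lt hTk)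
  obtain ⟨a, -, ha⟩ := exists_mem_notMem_of_card_lt_card hS
  have hfresh : ∀ w (hw : w ≠ v), G.Dist2Adj v w → c ⟨w, hw⟩ ≠ a := fun w hw h hca =>
    ha (mem_image.2 ⟨⟨w, hw⟩, mem_subtype.2 (hT w hw h), hca⟩)
  refine ⟨fun u => if h : u = v then a else c ⟨u, h⟩, fun u w huw h => ?_⟩
  by_cases hu : u = v <;> by_cases hw : w = v
  · exact absurd (hu.trans hw.symm) huw
  · subst hu; simpa [hw] using (hfresh w hw h).symm
  · subst hw; simpa [hu] using hfresh u hu (Dist2Adj.symm h)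
  · simpa [hu, hw] using hc ⟨u, hu⟩ ⟨w, hw⟩ (by simpa using huw) h

lemma card_biUnion_neighborFinset_erase_le [Fintype V] [DecidableRel G.Adj] [DecidableEq V]
    (v : V) :
    #((G.neighborFinset v).biUnion fun x => (G.neighborFinset x).erase v) ≤
      G.degree v * (G.maxDegree - 1) := by
  rw [← card_neighborFinset_eq_degree]
  refine card_biUnion_le_card_mul _ _ _ fun x hx => ?_
  rw [card_erase_of_mem (by simpa [adj_comm] using hx), card_neighborFinset_eq_degree]
  exact Nat.sub_le_sub_right (G.degree_le_maxDegree x) 1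

section Triangle

variable {v v₁ v₂ v₃ : V}

lemma degree_le_three [Fintype V] [DecidableRel G.Adj]
    (hN : G.neighborSet v = {v₁, v₂, v₃}) : G.degree v ≤ 3 := by
  classical
  rw [← card_neighborFinset_eq_degree]
  refine (card_le_card fun x hx => ?_).trans (card_le_three (a := v₁) (b := v₂) (c := v₃))
  simpa using Set.ext_iff.1 hN x |>.1 (by simpa using hx)

lemma mem_insert_biUnion_of_dist2Adj [Fintype V] [DecidableRel G.Adj] [DecidableEq V] {w : V}
    (hN : G.neighborSet v = {v₁, v₂, v₃}) (htri : G.Adj v₁ v₂) (hw : w ≠ v)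
    (h : G.Dist2Adj v w) :
    w ∈ insert v₃ ((G.neighborFinset v).biUnion fun x => (G.neighborFinset x).erase v) := by
  have hmem : ∀ x, G.Adj v x ↔ x = v₁ ∨ x = v₂ ∨ x = v₃ := Set.ext_iff.1 hN
  simp only [mem_insert, mem_biUnion, mem_neighborFinset, mem_erase]
  rcases h with h | ⟨x, hvx, hxw⟩
  · rcases (hmem w).1 h with rfl | rfl | rfl
    · exact .inr ⟨v₂, (hmem v₂).2 (by simp), hw, htri.symm⟩
    · exact .inr ⟨v₁, (hmem v₁).2 (by simp), hw, htri⟩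
    · exact .inl rfl
  · exact .inr ⟨x, hvx, hw, hxw⟩

lemma dist2Adj_addEdge_induce {u w : V} (hN : G.neighborSet v = {v₁, v₂, v₃})
    (htri : G.Adj v₁ v₂) (hv₁ : v₁ ≠ v) (hv₃ : v₃ ≠ v) (hu : u ≠ v) (hw : w ≠ v) (huw : u ≠ w)
    (h : G.Dist2Adj u w) :
    (addEdge (G.induce {u | u ≠ v}) ⟨v₁, hv₁⟩ ⟨v₃, hv₃⟩).Dist2Adj ⟨u, hu⟩ ⟨w, hw⟩ := by
  set G' := addEdge (G.induce {u | u ≠ v}) ⟨v₁, hv₁⟩ ⟨v₃, hv₃⟩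
  have hind : ∀ a b : {u : V | u ≠ v}, G.Adj a b → G'.Adj a b := fun _ _ h => .inl h
  have hmem : ∀ x, G.Adj v x ↔ x = v₁ ∨ x = v₂ ∨ x = v₃ := Set.ext_iff.1 hN
  have hcenter : ∀ y (hy : y ≠ v), G.Adj v y → y ≠ v₁ → G'.Adj ⟨v₁, hv₁⟩ ⟨y, hy⟩ := by
    intro y hy hvy hy₁
    rcases (hmem y).1 hvy with rfl | rfl | rfl
    · exact absurd rfl hy₁
    · exact hind _ _ htri
    · exact .inr (by simpa [Subtype.ext_iff] using hy₁.symm)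
  rcases h with h | ⟨x, hux, hxw⟩
  · exact .inl (hind _ _ h)
  by_cases hx : x = v
  · subst hx
    by_cases hu₁ : u = v₁
    · subst hu₁; exact .inl (hcenter w hw hxw (Ne.symm huw))
    by_cases hw₁ : w = v₁
    · subst hw₁; exact .inl (hcenter u hu hux.symm huw).symm
    exact .inr ⟨⟨v₁, hv₁⟩, (hcenter u hu hux.symm hu₁).symm, hcenter w hw hxw hw₁⟩
  · exact .inr ⟨⟨x, hx⟩, hind _ _ hux, hind _ _ hxw⟩

end Triangle

end SimpleGraph

open SimpleGraph in
theorem stmt9_general {V : Type*} [Fintype V] (G : SimpleGraph V)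
    [DecidableRel G.Adj] (v v₁ v₂ v₃ : V) (k : ℕ)
    (h1 : G.Adj v v₁) (h3 : G.Adj v v₃)
    (htri : G.Adj v₁ v₂)
    (hN : G.neighborSet v = {v₁, v₂, v₃})
    (hk : 3 * G.maxDegree - 1 ≤ k)
    (hcol : ∃ c : {u : V | u ≠ v} → Fin k,
      IsDist2Coloring
        (addEdge (G.induce {u | u ≠ v}) ⟨v₁, h1.ne'⟩ ⟨v₃, h3.ne'⟩) c) :
    ∃ c : V → Fin k, IsDist2Coloring G c := by
  classical
  obtain ⟨c, hc⟩ := hcol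
  set T := insert v₃ ((G.neighborFinset v).biUnion fun x => (G.neighborFinset x).erase v)
  have hTk : #T < k := by
    have hΔ : 1 ≤ G.maxDegree := (G.degree_pos_iff_exists_adj v).2 ⟨v₁, h1⟩ |>.trans_le
      (G.degree_le_maxDegree v)
    have hdeg := Nat.mul_le_mul_right (G.maxDegree - 1) (degree_le_three hN)
    have := card_biUnion_neighborFinset_erase_le (G := G) v
    have := card_insert_le v₃ ((G.neighborFinset v).biUnion fun x => (G.neighborFinset x).erase v)
    simp only [T]
    omega
  exact exists_isDist2Coloring_extend_of_card_lt v c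
    (fun u w huw h => hc u w huw
      (dist2Adj_addEdge_induce hN htri h1.ne' h3.ne' u.2 w.2 (Subtype.coe_ne_coe.2 huw) h))
    T (fun w hw h => mem_insert_biUnion_of_dist2Adj hN htri hw h) hTk

/-- Let `v v₁ v₂` be a triangle where `deg(v) = 3` with `N(v) = {v₁, v₂, v₃}`,
and let `G' = (G - v) + v₁v₃`. If `G'` admits a distance-2 coloring with
`k ≥ 3Δ(G) - 1` colors, then so does `G`. -/
theorem stmt9 {V : Type*} [Fintype V] [DecidableEq V] (G : SimpleGraph V)
    [DecidableRel G.Adj] (v v₁ v₂ v₃ : V) (k : ℕ)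
    (h1 : G.Adj v v₁) (h2 : G.Adj v v₂) (h3 : G.Adj v v₃)
    (htri : G.Adj v₁ v₂)
    (hdeg : G.degree v = 3)
    (hN : G.neighborSet v = {v₁, v₂, v₃})
    (hk : 3 * G.maxDegree - 1 ≤ k)
    (hcol : ∃ c : {u : V | u ≠ v} → Fin k,
      IsDist2Coloring
        (addEdge (G.induce {u | u ≠ v}) ⟨v₁, h1.ne'⟩ ⟨v₃, h3.ne'⟩) c) :
    ∃ c : V → Fin k, IsDist2Coloring G c :=
  stmt9_general G v v₁ v₂ v₃ k h1 h3 htri hN hk hcol
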